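/- arXiv:0807.2054 — 6 statements merged into one kernel-verified Lean document; each statement's English description precedes it below -/
import Mathlib

section
/- The function F(c) = log(sqrt(c^2+1) + c) - sqrt(1 + c^(-2)) has exactly one zero on the interval (0, ∞). -/
noncomputable def Fz (c : ℝ) : ℝ :=
  Real.log (Real.sqrt (c ^ 2 + 1) + c) - Real.sqrt (1 + c⁻¹ ^ 2)

lemma Fz_strictMono {a b : ℝ} (ha : 0 < a) (hab : a < b) : Fz a < Fz b := by
  have hb : 0 < b := ha.trans hab
  have h1 : Real.sqrt (a ^ 2 + 1) + a < Real.sqrt (b ^ 2 + 1) + b := by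
    have : a ^ 2 + 1 < b ^ 2 + 1 := by nlinarith
    have := Real.sqrt_lt_sqrt (by positivity) this
    linarith
  have hpos : 0 < Real.sqrt (a ^ 2 + 1) + a := by positivity
  have hlog : Real.log (Real.sqrt (a ^ 2 + 1) + a) < Real.log (Real.sqrt (b ^ 2 + 1) + b) :=
    Real.log_lt_log hpos h1
  have hinv : b⁻¹ ^ 2 < a⁻¹ ^ 2 := by
    have h1 : b⁻¹ < a⁻¹ := by exact inv_strictAnti₀ ha hab
    have h2 : 0 < b⁻¹ := by positivity
    nlinarith
  have hs : Real.sqrt (1 + b⁻¹ ^ 2) < Real.sqrt (1 + a⁻¹ ^ 2) :=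
    Real.sqrt_lt_sqrt (by positivity) (by linarith)
  unfold Fz
  linarith

lemma Fz_cont : ContinuousOn Fz (Set.Icc (1/10 : ℝ) 10) := by
  apply ContinuousOn.sub
  · apply ContinuousOn.log
    · exact ((Real.continuous_sqrt.comp (by continuity)).add continuous_id).continuousOn
    · intro x hx
      have hx1 : (0:ℝ) < x := lt_of_lt_of_le (by norm_num) hx.1
      positivity
  · apply Real.continuous_sqrt.comp_continuousOn
    apply ContinuousOn.add continuousOn_const
    apply ContinuousOn.pow
    apply ContinuousOn.inv₀ continuousOn_id
    intro x hx
    have hx1 : (0:ℝ) < x := lt_of_lt_of_le (by norm_num) hx.1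
    exact ne_of_gt hx1

lemma Fz_lo : Fz (1/10) ≤ 0 := by
  unfold Fz
  have h1 : Real.sqrt ((1/10:ℝ) ^ 2 + 1) ≤ 1.1 := by
    rw [show ((1/10:ℝ) ^ 2 + 1) = 1.01 by norm_num]
    rw [show (1.1:ℝ) = Real.sqrt (1.1^2) by rw [Real.sqrt_sq]; norm_num]
    exact Real.sqrt_le_sqrt (by norm_num)
  have h2 : Real.log (Real.sqrt ((1/10:ℝ) ^ 2 + 1) + 1/10) ≤ 0.2 := by
    have := Real.log_le_sub_one_of_pos (x := Real.sqrt ((1/10:ℝ) ^ 2 + 1) + 1/10) (by positivity)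
    linarith
  have h3 : (10:ℝ) ≤ Real.sqrt (1 + ((1/10:ℝ))⁻¹ ^ 2) := by
    rw [show (1 + ((1/10:ℝ))⁻¹ ^ 2) = 101 by norm_num]
    rw [show (10:ℝ) = Real.sqrt 100 by rw [show (100:ℝ) = 10^2 by norm_num, Real.sqrt_sq]; norm_num]
    exact Real.sqrt_le_sqrt (by norm_num)
  linarith

lemma Fz_hi : 0 ≤ Fz 10 := by
  unfold Fz
  have h1 : (10:ℝ) ≤ Real.sqrt ((10:ℝ) ^ 2 + 1) := by
    rw [show (10:ℝ) = Real.sqrt (10^2) by rw [Real.sqrt_sq]; norm_num]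
    exact Real.sqrt_le_sqrt (by norm_num)
  have h2 : Real.sqrt (1 + ((10:ℝ))⁻¹ ^ 2) ≤ 1.1 := by
    rw [show (1 + ((10:ℝ))⁻¹ ^ 2) = 1.01 by norm_num]
    rw [show (1.1:ℝ) = Real.sqrt (1.1^2) by rw [Real.sqrt_sq]; norm_num]
    exact Real.sqrt_le_sqrt (by norm_num)
  have h3 : (1.1:ℝ) ≤ Real.log (Real.sqrt ((10:ℝ) ^ 2 + 1) + 10) := by
    rw [show (1.1:ℝ) = Real.log (Real.exp 1.1) by rw [Real.log_exp]]
    apply Real.log_le_log (Real.exp_pos _)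
    have he : Real.exp 1.1 ≤ Real.exp 2 := Real.exp_le_exp.mpr (by norm_num)
    have h2' : Real.exp 2 < 2.7182818286 ^ 2 := by
      rw [show (2:ℝ) = 1 + 1 by norm_num, Real.exp_add, sq]
      have := Real.exp_one_lt_d9
      nlinarith [Real.exp_pos 1]
    have h5 : Real.exp 1.1 ≤ 20 := by nlinarith
    norm_num at h1 ⊢
    linarith only [h1, h5]
  linarith

theorem stmt_0 :
    ∃! c : ℝ, 0 < c ∧
      Real.log (Real.sqrt (c ^ 2 + 1) + c) - Real.sqrt (1 + c⁻¹ ^ 2) = 0 := by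
  have hex : ∃ c ∈ Set.Icc (1/10 : ℝ) 10, Fz c = 0 := by
    have := intermediate_value_Icc (by norm_num : (1/10:ℝ) ≤ 10) Fz_cont
    have h0 : (0:ℝ) ∈ Set.Icc (Fz (1/10)) (Fz 10) := ⟨Fz_lo, Fz_hi⟩
    obtain ⟨c, hc, hfc⟩ := this h0
    exact ⟨c, hc, hfc⟩
  obtain ⟨c, hc, hfc⟩ := hex
  have hcpos : 0 < c := lt_of_lt_of_le (by norm_num) hc.1
  refine ⟨c, ⟨hcpos, hfc⟩, ?_⟩
  rintro y ⟨hy, hfy⟩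
  by_contra hne
  rcases lt_or_gt_of_ne hne with h | h
  · have := Fz_strictMono hy h
    rw [show Fz y = 0 from hfy, show Fz c = 0 from hfc] at this
    exact lt_irrefl _ this
  · have := Fz_strictMono hcpos h
    rw [show Fz y = 0 from hfy, show Fz c = 0 from hfc] at this
    exact lt_irrefl _ this
end

section
/- The unique positive solution c of log(sqrt(c^2+1)+c) = sqrt(1+c^(-2)) satisfies 1.5088 < c < 1.5089. -/
open Real Finset

lemma exp_lb : (1.8101043 : ℝ) + 1.5088 < Real.exp 1.19964 := by
  have h := Real.sum_le_exp_of_nonneg (x := 1.19964) (by norm_num) 12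
  refine lt_of_lt_of_le ?_ h
  norm_num [Finset.sum_range_succ, Nat.factorial]

lemma exp_ub : Real.exp 1.19968 < (1.8101876 : ℝ) + 1.5089 := by
  have h2 : Real.exp 0.59984 ≤ (∑ m ∈ Finset.range 9, (0.59984:ℝ) ^ m / m.factorial) +
      (0.59984:ℝ) ^ 9 * (9 + 1) / (Nat.factorial 9 * 9) :=
    Real.exp_bound' (by norm_num) (by norm_num) (by norm_num)
  have hsum : (∑ m ∈ Finset.range 9, (0.59984:ℝ) ^ m / m.factorial) +
      (0.59984:ℝ) ^ 9 * (9 + 1) / (Nat.factorial 9 * 9) ≤ 1.8218322 := by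
    norm_num [Finset.sum_range_succ, Nat.factorial]
  have h3 : Real.exp 0.59984 ≤ 1.8218322 := h2.trans hsum
  have h4 : Real.exp 1.19968 = Real.exp 0.59984 * Real.exp 0.59984 := by
    rw [← Real.exp_add]; norm_num
  have hpos : (0:ℝ) ≤ Real.exp 0.59984 := (Real.exp_pos _).le
  nlinarith [mul_le_mul h3 h3 hpos (by norm_num : (0:ℝ) ≤ 1.8218322)]

lemma key1 : Real.log (Real.sqrt ((1.5088:ℝ) ^ 2 + 1) + 1.5088) <
    Real.sqrt (1 + 1 / (1.5088:ℝ) ^ 2) := by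
  have hs : Real.sqrt ((1.5088:ℝ) ^ 2 + 1) < 1.8101043 := by
    rw [Real.sqrt_lt' (by norm_num)]; norm_num
  have hlog : Real.log (Real.sqrt ((1.5088:ℝ) ^ 2 + 1) + 1.5088) < 1.19964 := by
    rw [Real.log_lt_iff_lt_exp (by positivity)]
    have := exp_lb
    linarith
  refine hlog.trans_le ?_
  rw [Real.le_sqrt (by norm_num) (by positivity)]
  norm_num

lemma key2 : Real.sqrt (1 + 1 / (1.5089:ℝ) ^ 2) <
    Real.log (Real.sqrt ((1.5089:ℝ) ^ 2 + 1) + 1.5089) := by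
  have hs : (1.8101876:ℝ) < Real.sqrt ((1.5089:ℝ) ^ 2 + 1) := by
    rw [Real.lt_sqrt (by norm_num)]; norm_num
  have hlog : (1.19968:ℝ) < Real.log (Real.sqrt ((1.5089:ℝ) ^ 2 + 1) + 1.5089) := by
    rw [Real.lt_log_iff_exp_lt (by positivity)]
    have := exp_ub
    linarith
  refine lt_of_le_of_lt ?_ hlog
  rw [show (1.19968:ℝ) = Real.sqrt (1.19968 ^ 2) from (Real.sqrt_sq (by norm_num)).symm]
  apply Real.sqrt_le_sqrt
  norm_num

theorem stmt_2 (c : ℝ) (hc : 0 < c)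
    (heq : Real.log (Real.sqrt (c ^ 2 + 1) + c) = Real.sqrt (1 + 1 / c ^ 2)) :
    1.5088 < c ∧ c < 1.5089 := by
  constructor
  · by_contra h
    push_neg at h
    have h1 : Real.log (Real.sqrt (c ^ 2 + 1) + c) ≤
        Real.log (Real.sqrt ((1.5088:ℝ) ^ 2 + 1) + 1.5088) := by
      apply Real.log_le_log (by positivity)
      have : Real.sqrt (c ^ 2 + 1) ≤ Real.sqrt ((1.5088:ℝ) ^ 2 + 1) :=
        Real.sqrt_le_sqrt (by nlinarith)
      linarith
    have h2 : Real.sqrt (1 + 1 / (1.5088:ℝ) ^ 2) ≤ Real.sqrt (1 + 1 / c ^ 2) := by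
      apply Real.sqrt_le_sqrt
      have : 1 / (1.5088:ℝ) ^ 2 ≤ 1 / c ^ 2 := by
        apply one_div_le_one_div_of_le (by positivity)
        nlinarith
      linarith
    have := key1
    rw [heq] at h1
    linarith
  · by_contra h
    push_neg at h
    have h1 : Real.log (Real.sqrt ((1.5089:ℝ) ^ 2 + 1) + 1.5089) ≤
        Real.log (Real.sqrt (c ^ 2 + 1) + c) := by
      apply Real.log_le_log (by positivity)
      have : Real.sqrt ((1.5089:ℝ) ^ 2 + 1) ≤ Real.sqrt (c ^ 2 + 1) :=
        Real.sqrt_le_sqrt (by nlinarith)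
      linarith
    have h2 : Real.sqrt (1 + 1 / c ^ 2) ≤ Real.sqrt (1 + 1 / (1.5089:ℝ) ^ 2) := by
      apply Real.sqrt_le_sqrt
      have : 1 / c ^ 2 ≤ 1 / (1.5089:ℝ) ^ 2 := by
        apply one_div_le_one_div_of_le (by positivity)
        nlinarith
      linarith
    have := key2
    rw [heq] at h1
    linarith
end

section
/- The unique positive solution c of log(sqrt(c^2+1)+c) = sqrt(1+c^(-2)) satisfies 2/π < c < 2e/π. -/
theorem stmt_3 (c : ℝ) (hc : 0 < c)
    (heq : Real.log (Real.sqrt (c ^ 2 + 1) + c) = Real.sqrt (1 + 1 / c ^ 2)) :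
    2 / Real.pi < c ∧ c < 2 * Real.exp 1 / Real.pi := by
  have hπ : (3.14 : ℝ) < Real.pi := by linarith [Real.pi_gt_d6]
  have hπ' : Real.pi < 3.1416 := by linarith [Real.pi_lt_d6]
  have he : (2.71828 : ℝ) < Real.exp 1 := by linarith [Real.exp_one_gt_d9]
  have he' : Real.exp 1 < 2.71829 := by linarith [Real.exp_one_lt_d9]
  have hsn := Real.sqrt_nonneg (c ^ 2 + 1)
  constructor
  · by_contra h
    push_neg at h
    have hc64 : c ≤ 0.64 := by
      have h2 : 2 / Real.pi ≤ 0.64 := by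
        rw [div_le_iff₀ (by positivity)]; nlinarith
      linarith
    have hs : Real.sqrt (c ^ 2 + 1) < 1.19 := by
      rw [show (1.19 : ℝ) = Real.sqrt (1.19 ^ 2) from (Real.sqrt_sq (by norm_num)).symm]
      apply Real.sqrt_lt_sqrt (by positivity)
      nlinarith
    have hLHS : Real.log (Real.sqrt (c ^ 2 + 1) + c) < 1 := by
      rw [Real.log_lt_iff_lt_exp (by positivity)]
      nlinarith
    have hRHS : (1 : ℝ) < Real.sqrt (1 + 1 / c ^ 2) := by
      rw [show (1 : ℝ) = Real.sqrt 1 from Real.sqrt_one.symm]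
      apply Real.sqrt_lt_sqrt (by norm_num)
      have : 0 < 1 / c ^ 2 := by positivity
      simp only [Real.sqrt_one]
      linarith
    linarith [heq ▸ hLHS]
  · by_contra h
    push_neg at h
    have hc17 : (1.7 : ℝ) ≤ c := by
      have : (1.7 : ℝ) ≤ 2 * Real.exp 1 / Real.pi := by
        rw [le_div_iff₀ (by positivity)]; nlinarith
      linarith
    -- exp 0.2 < 1.34
    have hexp02 : Real.exp 0.2 < 1.34 := by
      have h5 : Real.exp 0.2 ^ 5 < 1.34 ^ 5 := by
        rw [← Real.exp_nat_mul]
        norm_num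
        nlinarith
      by_contra hge
      push_neg at hge
      exact absurd h5 (not_lt.mpr (pow_le_pow_left₀ (by norm_num) hge 5))
    have hexp12 : Real.exp 1.2 < 3.643 := by
      have : Real.exp 1.2 = Real.exp 1 * Real.exp 0.2 := by
        rw [← Real.exp_add]; norm_num
      rw [this]
      nlinarith [Real.exp_pos 0.2]
    have hs : (1.97 : ℝ) ≤ Real.sqrt (c ^ 2 + 1) := by
      rw [show (1.97 : ℝ) = Real.sqrt (1.97 ^ 2) from (Real.sqrt_sq (by norm_num)).symm]
      apply Real.sqrt_le_sqrt
      nlinarith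
    have hLHS : (1.2 : ℝ) < Real.log (Real.sqrt (c ^ 2 + 1) + c) := by
      rw [Real.lt_log_iff_exp_lt (by positivity)]
      calc Real.exp 1.2 < 3.643 := hexp12
        _ < 1.97 + 1.7 := by norm_num
        _ ≤ Real.sqrt (c ^ 2 + 1) + c := by linarith
    have hRHS : Real.sqrt (1 + 1 / c ^ 2) ≤ 1.2 := by
      rw [show (1.2 : ℝ) = Real.sqrt (1.2 ^ 2) from (Real.sqrt_sq (by norm_num)).symm]
      apply Real.sqrt_le_sqrt
      have h1 : 1 / c ^ 2 ≤ 1 / 1.7 ^ 2 := by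
        apply one_div_le_one_div_of_le (by norm_num)
        nlinarith
      norm_num at h1 ⊢
      linarith
    linarith [heq ▸ hLHS]
end

section
/- The indicator function of f(z) = sin z equals |sin θ|: for each θ, limsup_{r→∞} (log |sin(r e^{iθ})|)/r = |sin θ|. -/
/-!
Since `‖sin (x + y i)‖² = sin² x + sinh² y`, we have `sinh |y| ≤ ‖sin z‖ ≤ cosh y`, hence
`log ‖sin z‖ = |Im z| + O(1)` once `|Im z| ≥ 1`. On the ray `z = r e^{iθ}` one has
`|Im z| = r |sin θ|`, so for `sin θ ≠ 0` the quotient `log ‖sin z‖ / r` even converges to `|sin θ|`.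
For `sin θ = 0` the ray runs along the real axis, where `log |sin r| ≤ 0` with equality at
`r = π/2 + 2πn`, so the limsup is `0`.
-/

open Filter Topology

namespace Real

theorem exp_div_four_le_sinh {t : ℝ} (ht : 1 ≤ t) : exp t / 4 ≤ sinh t := by
  have hneg : exp (-t) ≤ 1 := exp_le_one_iff.2 (by linarith)
  have htwo : 2 ≤ exp t := by linarith [add_one_le_exp t]
  rw [sinh_eq]
  linarith

theorem cosh_le_exp_abs (x : ℝ) : cosh x ≤ exp |x| := by
  have : exp (-|x|) ≤ exp |x| := exp_le_exp.2 (by linarith [abs_nonneg x])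
  rw [← cosh_abs, cosh_eq]
  linarith

theorem limsup_log_abs_sin_div_eq_zero : limsup (fun r => log |sin r| / r) atTop = 0 := by
  have hle : ∀ᶠ r in atTop, log |sin r| / r ≤ 0 := by
    filter_upwards [eventually_ge_atTop 0] with r hr
    exact div_nonpos_of_nonpos_of_nonneg (log_nonpos (abs_nonneg _) (abs_sin_le_one r)) hr
  have hfreq : ∃ᶠ r in atTop, 0 ≤ log |sin r| / r :=
    (tendsto_atTop_add_const_left _ (π / 2)
      (tendsto_natCast_atTop_atTop.atTop_mul_const two_pi_pos)).frequently
      (Frequently.of_forall fun n => by simp [sin_add_nat_mul_two_pi])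
  exact le_antisymm (limsup_le_of_le (IsCoboundedUnder.of_frequently_ge hfreq) hle)
    (le_limsup_of_frequently_le hfreq (isBoundedUnder_of_eventually_le hle))

end Real

theorem tendsto_div_atTop_of_abs_sub_mul_le {f : ℝ → ℝ} {c C : ℝ}
    (h : ∀ᶠ r in atTop, |f r - c * r| ≤ C) : Tendsto (fun r => f r / r) atTop (𝓝 c) := by
  have hsmall : Tendsto (fun r => r⁻¹ * (f r - c * r)) atTop (𝓝 0) :=
    tendsto_inv_atTop_zero.zero_mul_isBoundedUnder_le ⟨C, by simpa using h⟩
  refine (by simpa using tendsto_const_nhds.add hsmall : Tendsto _ _ (𝓝 c)).congr' ?_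
  filter_upwards [eventually_gt_atTop 0] with r hr
  field_simp
  ring

namespace Complex

theorem norm_sin_sq (z : ℂ) : ‖sin z‖ ^ 2 = Real.sin z.re ^ 2 + Real.sinh z.im ^ 2 := by
  rw [Complex.sq_norm, normSq_apply, sin_eq, ← ofReal_sin, ← ofReal_cos, ← ofReal_cosh,
    ← ofReal_sinh]
  simp only [add_re, add_im, mul_re, mul_im, ofReal_re, ofReal_im, I_re, I_im]
  linear_combination Real.sin z.re ^ 2 * Real.cosh_sq z.im
    + Real.sinh z.im ^ 2 * Real.sin_sq_add_cos_sq z.re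

theorem abs_sinh_im_le_norm_sin (z : ℂ) : |Real.sinh z.im| ≤ ‖sin z‖ :=
  abs_le_of_sq_le_sq (by rw [norm_sin_sq]; nlinarith [sq_nonneg (Real.sin z.re)]) (norm_nonneg _)

theorem norm_sin_le_cosh_im (z : ℂ) : ‖sin z‖ ≤ Real.cosh z.im :=
  (sq_le_sq₀ (norm_nonneg _) (Real.cosh_pos _).le).1 <| by
    rw [norm_sin_sq, Real.cosh_sq']
    nlinarith [Real.sin_sq_le_one z.re]

theorem abs_log_norm_sin_sub_abs_im_le {z : ℂ} (hz : 1 ≤ |z.im|) :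
    |Real.log ‖sin z‖ - (|z.im|)| ≤ Real.log 4 := by
  have hlower : Real.exp |z.im| / 4 ≤ ‖sin z‖ :=
    (Real.exp_div_four_le_sinh hz).trans
      ((Real.abs_sinh _).symm.trans_le (abs_sinh_im_le_norm_sin z))
  have hupper : ‖sin z‖ ≤ Real.exp |z.im| :=
    (norm_sin_le_cosh_im z).trans (Real.cosh_le_exp_abs _)
  have hpos : 0 < ‖sin z‖ := lt_of_lt_of_le (by positivity) hlower
  have hlog_upper : Real.log ‖sin z‖ ≤ |z.im| :=
    (Real.log_le_log hpos hupper).trans_eq (Real.log_exp _)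
  have hlog_lower : |z.im| - Real.log 4 ≤ Real.log ‖sin z‖ := by
    rw [← Real.log_exp |z.im|, ← Real.log_div (Real.exp_ne_zero _) (by norm_num)]
    exact Real.log_le_log (by positivity) hlower
  rw [abs_sub_le_iff]
  constructor <;> linarith [Real.log_pos (by norm_num : (1 : ℝ) < 4)]

theorem im_ofReal_mul_exp_I_mul (r θ : ℝ) : (r * exp (I * θ)).im = r * Real.sin θ := by
  rw [mul_comm I, im_ofReal_mul, exp_ofReal_mul_I_im]

theorem tendsto_log_norm_sin_ofReal_mul_exp_I_mul_div {θ : ℝ} (hθ : Real.sin θ ≠ 0) :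
    Tendsto (fun r : ℝ => Real.log ‖sin (r * exp (I * θ))‖ / r) atTop (𝓝 |Real.sin θ|) := by
  have hs : 0 < |Real.sin θ| := abs_pos.2 hθ
  refine tendsto_div_atTop_of_abs_sub_mul_le (C := Real.log 4) ?_
  filter_upwards [eventually_ge_atTop |Real.sin θ|⁻¹] with r hr
  have him : |(r * exp (I * θ)).im| = |Real.sin θ| * r := by
    rw [im_ofReal_mul_exp_I_mul, abs_mul, abs_of_nonneg ((inv_pos.2 hs).le.trans hr), mul_comm]
  have hone : 1 ≤ |(r * exp (I * θ)).im| := him ▸ (inv_le_iff_one_le_mul₀' hs).1 hr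
  simpa only [him] using abs_log_norm_sin_sub_abs_im_le hone

theorem norm_sin_ofReal_mul_exp_I_mul_of_sin_eq_zero {θ : ℝ} (hθ : Real.sin θ = 0) (r : ℝ) :
    ‖sin (r * exp (I * θ))‖ = |Real.sin r| := by
  rw [mul_comm I, exp_mul_I, ← ofReal_cos, ← ofReal_sin, hθ, ofReal_zero, zero_mul, add_zero,
    ← ofReal_mul, ← ofReal_sin, norm_real, Real.norm_eq_abs]
  rcases Real.sin_eq_zero_iff_cos_eq.1 hθ with h | h <;> simp [h]

end Complex

theorem stmt_6_general (θ : ℝ) :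
    Filter.limsup
      (fun r : ℝ =>
        Real.log ‖Complex.sin (r * Complex.exp (Complex.I * θ))‖ / r)
      atTop = |Real.sin θ| := by
  by_cases hθ : Real.sin θ = 0
  · simp_rw [Complex.norm_sin_ofReal_mul_exp_I_mul_of_sin_eq_zero hθ,
      Real.limsup_log_abs_sin_div_eq_zero, hθ, abs_zero]
  · exact (Complex.tendsto_log_norm_sin_ofReal_mul_exp_I_mul_div hθ).limsup_eq

theorem stmt_6 (θ : ℝ) (hθ : θ ∈ Set.Ioc (-Real.pi) Real.pi) :
    Filter.limsup
      (fun r : ℝ =>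
        Real.log ‖Complex.sin (r * Complex.exp (Complex.I * θ))‖ / r)
      atTop = |Real.sin θ| :=
  stmt_6_general θ
end

section
/- If f is entire with f(0)=1 and |f(z)| ≤ exp(σ|z|), then the upper density of its zeros satisfies limsup_{r→∞} n(r)/r ≤ eσ. -/
open Filter

section ZChelpers

open Set Metric Topology

open Filter Set Metric Topology
namespace ZC

variable {f g u : ℂ → ℂ} {z a : ℂ}

lemma order_eq_zero_of_ne (hf : AnalyticAt ℂ f z) (h : f z ≠ 0) : analyticOrderAt f z = 0 := by
  rw [show ((0:ℕ∞)) = ((0:ℕ):ℕ∞) by rfl, hf.analyticOrderAt_eq_natCast]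
  exact ⟨f, hf, h, by simp⟩

lemma ne_zero_of_order_eq_zero (hf : AnalyticAt ℂ f z) (h : analyticOrderAt f z = 0) : f z ≠ 0 := by
  rw [show ((0:ℕ∞)) = ((0:ℕ):ℕ∞) by rfl, hf.analyticOrderAt_eq_natCast] at h
  obtain ⟨g, hg, hgz, hfg⟩ := h
  have := hfg.self_of_nhds
  simpa [this] using hgz

lemma order_ne_top (hf : Differentiable ℂ f) (h0 : f 0 ≠ 0) (z : ℂ) :
    analyticOrderAt f z ≠ ⊤ := by
  intro h
  rw [analyticOrderAt_eq_top] at h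
  have hA : AnalyticOnNhd ℂ f Set.univ := fun w _ => hf.analyticAt w
  have := hA.eqOn_zero_of_preconnected_of_eventuallyEq_zero isPreconnected_univ (mem_univ z)
    (by filter_upwards [h] with w hw; simp [hw])
  exact h0 (this (mem_univ 0))

lemma finite_zeros (hf : Differentiable ℂ f) (h0 : f 0 ≠ 0) (r : ℝ) :
    {z : ℂ | z ∈ closedBall (0:ℂ) r ∧ f z = 0}.Finite := by
  by_contra h
  have hinf : {z : ℂ | z ∈ closedBall (0:ℂ) r ∧ f z = 0}.Infinite := h
  obtain ⟨x, -, hx⟩ := hinf.exists_accPt_of_subset_isCompact (isCompact_closedBall _ _)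
    (fun z hz => hz.1)
  rw [accPt_iff_frequently] at hx
  have hfreq : ∃ᶠ w in 𝓝[≠] x, f w = 0 := by
    rw [frequently_nhdsWithin_iff]
    exact hx.mono fun w hw => ⟨hw.2.2, hw.1⟩
  have hA : AnalyticOnNhd ℂ f Set.univ := fun w _ => hf.analyticAt w
  have := hA.eqOn_zero_of_preconnected_of_frequently_eq_zero isPreconnected_univ (mem_univ x) hfreq
  exact h0 (this (mem_univ 0))

lemma eventuallyEq_of_punctured (hf : ContinuousAt f a) (hg : ContinuousAt g a)
    (h : ∀ᶠ w in 𝓝[≠] a, f w = g w) : ∀ᶠ w in 𝓝 a, f w = g w := by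
  have ha : f a = g a := by
    have h1 : Filter.Tendsto f (𝓝[≠] a) (𝓝 (f a)) :=
      (hf.continuousWithinAt (s := {a}ᶜ)).tendsto
    have h2 : Filter.Tendsto g (𝓝[≠] a) (𝓝 (g a)) :=
      (hg.continuousWithinAt (s := {a}ᶜ)).tendsto
    exact tendsto_nhds_unique (h1.congr' (by filter_upwards [h] with w hw using hw)) h2
  rw [eventually_nhdsWithin_iff] at h
  filter_upwards [h] with w hw
  by_cases hwa : w = a
  · subst hwa; exact ha
  · exact hw hwa

lemma order_mul_unit (hf : AnalyticAt ℂ f z) (hu : AnalyticAt ℂ u z)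
    (hfu : AnalyticAt ℂ (fun w => f w * u w) z) (h : u z ≠ 0) {n : ℕ}
    (ho : analyticOrderAt f z = n) : analyticOrderAt (fun w => f w * u w) z = n := by
  rw [hf.analyticOrderAt_eq_natCast] at ho
  obtain ⟨g, hg, hgz, hfg⟩ := ho
  rw [hfu.analyticOrderAt_eq_natCast]
  refine ⟨fun w => g w * u w, hg.mul hu, mul_ne_zero hgz h, ?_⟩
  filter_upwards [hfg] with w hw
  simp only [smul_eq_mul] at hw ⊢
  rw [hw]; ring

lemma dslope_entire (hf : Differentiable ℂ f) (a : ℂ) : Differentiable ℂ (dslope f a) := by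
  rw [← differentiableOn_univ]
  rw [Complex.differentiableOn_dslope (by simp : (univ : Set ℂ) ∈ 𝓝 a)]
  exact hf.differentiableOn

lemma factor (hf : Differentiable ℂ f) (ha : f a = 0) (w : ℂ) :
    f w = (w - a) * dslope f a w := by
  have := sub_smul_dslope f a w
  rw [ha, sub_zero] at this
  rw [← this, smul_eq_mul]

lemma peel_order_ne (hf : Differentiable ℂ f) (ha : f a = 0) (hz : z ≠ a) {n : ℕ}
    (ho : analyticOrderAt f z = n) :
    analyticOrderAt (dslope f a) z = n := by
  rw [(hf.analyticAt z).analyticOrderAt_eq_natCast] at ho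
  rw [((dslope_entire hf a).analyticAt z).analyticOrderAt_eq_natCast]
  obtain ⟨g, hg, hgz, hfg⟩ := ho
  refine ⟨fun w => (w - a)⁻¹ * g w, ((analyticAt_id.sub analyticAt_const).inv
    (sub_ne_zero.2 hz)).mul hg, mul_ne_zero (inv_ne_zero (sub_ne_zero.2 hz)) hgz, ?_⟩
  filter_upwards [hfg, eventually_ne_nhds hz] with w hw hwa
  have h2 : (w - a) ≠ 0 := sub_ne_zero.2 hwa
  have h1 : dslope f a w = (w - a)⁻¹ * f w := by
    rw [factor hf ha w]; field_simp
  simp only [smul_eq_mul] at hw ⊢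
  rw [h1, hw]; ring

lemma peel_order_at (hf : Differentiable ℂ f) (ha : f a = 0) {n : ℕ}
    (ho : analyticOrderAt f a = (n + 1 : ℕ)) :
    analyticOrderAt (dslope f a) a = n := by
  rw [(hf.analyticAt a).analyticOrderAt_eq_natCast] at ho
  rw [((dslope_entire hf a).analyticAt a).analyticOrderAt_eq_natCast]
  obtain ⟨g, hg, hgz, hfg⟩ := ho
  refine ⟨g, hg, hgz, ?_⟩
  have hpunct : ∀ᶠ w in 𝓝[≠] a, dslope f a w = (w - a) ^ n * g w := by
    rw [eventually_nhdsWithin_iff]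
    filter_upwards [hfg] with w hw hwa
    have h2 : (w - a) ≠ 0 := sub_ne_zero.2 (by simpa using hwa)
    simp only [smul_eq_mul] at hw
    have h3 : (w - a) * dslope f a w = (w - a) * ((w - a) ^ n * g w) := by
      rw [← factor hf ha w, hw, pow_succ]; ring
    exact mul_left_cancel₀ h2 h3
  have hcont1 : ContinuousAt (dslope f a) a := ((dslope_entire hf a) a).continuousAt
  have hcont2 : ContinuousAt (fun w => (w - a) ^ n * g w) a :=
    (((continuous_id.sub continuous_const).pow n).continuousAt).mul hg.continuousAt
  filter_upwards [eventuallyEq_of_punctured hcont1 hcont2 hpunct] with w hw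
  rw [smul_eq_mul]; exact hw

lemma order_pos_of_zero (hf : Differentiable ℂ f) (h0 : f 0 ≠ 0) (ha : f a = 0) :
    ∃ n : ℕ, analyticOrderAt f a = (n + 1 : ℕ) := by
  have hne := order_ne_top hf h0 a
  set m := (analyticOrderAt f a).toNat with hm
  have hom : analyticOrderAt f a = (m : ℕ∞) := (ENat.coe_toNat hne).symm
  match m, hom with
  | 0, hom => exact absurd ha (ne_zero_of_order_eq_zero (hf.analyticAt a) (by simpa using hom))
  | (k+1), hom => exact ⟨k, hom⟩

end ZC

end ZChelpers

open ZC Set Metric Topology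

/-- The number of zeros of an entire function `f`, counted with multiplicity,
in the closed disc of radius `r` centered at the origin. -/
noncomputable def zeroCount (f : ℂ → ℂ) (hf : Differentiable ℂ f) (r : ℝ) : ℕ :=
  ∑ᶠ z ∈ Metric.closedBall (0 : ℂ) r, (analyticOrderAt f z).toNat

lemma zeroCount_eq_sum {f : ℂ → ℂ} (hf : Differentiable ℂ f) {r : ℝ} (t : Finset ℂ)
    (h1 : ∀ z ∈ closedBall (0:ℂ) r, f z = 0 → z ∈ t)
    (h2 : ∀ z ∈ t, z ∈ closedBall (0:ℂ) r) :
    zeroCount f hf r = ∑ z ∈ t, (analyticOrderAt f z).toNat := by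
  apply finsum_mem_eq_sum_of_inter_support_eq
  ext z
  simp only [mem_inter_iff, Function.mem_support, Finset.coe_sort_coe, Finset.mem_coe]
  constructor
  · rintro ⟨hz, hsupp⟩
    refine ⟨h1 z hz ?_, hsupp⟩
    by_contra hfz
    exact hsupp (by rw [order_eq_zero_of_ne (hf.analyticAt z) hfz]; rfl)
  · rintro ⟨ht, hsupp⟩; exact ⟨h2 z ht, hsupp⟩

lemma key : ∀ (n : ℕ) (f : ℂ → ℂ) (hf : Differentiable ℂ f), f 0 ≠ 0 →
    ∀ (r R M : ℝ), 0 < r → r < R →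
    (∀ z ∈ Metric.sphere (0:ℂ) R, ‖f z‖ ≤ M) →
    n ≤ zeroCount f hf r → ‖f 0‖ * (R / r) ^ n ≤ M := by
  intro n
  induction n with
  | zero =>
    intro f hf h0 r R M hr hrR hM _
    simp only [pow_zero, mul_one]
    have hR : 0 < R := hr.trans hrR
    apply Complex.norm_le_of_forall_mem_frontier_norm_le
      (isBounded_ball (x := (0:ℂ)) (r := R)) hf.diffContOnCl
    · rwa [frontier_ball _ hR.ne']
    · rw [closure_ball _ hR.ne']; exact mem_closedBall_self hR.le
  | succ n ih =>
    intro f hf h0 r R M hr hrR hM hn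
    have hR : 0 < R := hr.trans hrR
    -- find a zero
    have hzero : ∃ a ∈ closedBall (0:ℂ) r, f a = 0 := by
      by_contra hno
      push_neg at hno
      have := zeroCount_eq_sum hf (r := r) ∅ (fun z hz hfz => absurd hfz (hno z hz)) (by simp)
      rw [this] at hn; simp at hn
    obtain ⟨a, haball, hfa⟩ := hzero
    have ha0 : a ≠ 0 := by rintro rfl; exact h0 hfa
    have haabs : ‖a‖ ≤ r := by rwa [← mem_closedBall_zero_iff]
    have haR : ‖a‖ < R := lt_of_le_of_lt haabs hrR
    set d := dslope f a with hd
    have hdd : Differentiable ℂ d := dslope_entire hf a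
    set B : ℂ → ℂ := fun z => ((R:ℂ)^2 - (starRingEnd ℂ a) * z) / R with hB
    have hBd : Differentiable ℂ B :=
      ((differentiable_const _).sub ((differentiable_const _).mul differentiable_id)).div_const _
    have hg : Differentiable ℂ (fun z => d z * B z) := hdd.mul hBd
    set g : ℂ → ℂ := fun z => d z * B z with hgdef
    -- B nonzero on closed ball r
    have hBne : ∀ z ∈ closedBall (0:ℂ) r, B z ≠ 0 := by
      intro z hz
      have hzr : ‖z‖ ≤ r := by rwa [← mem_closedBall_zero_iff]
      have h2 : (starRingEnd ℂ a) * z ≠ (R:ℂ)^2 := by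
        intro he
        have h3 := congrArg norm he
        rw [norm_mul, Complex.norm_conj] at h3
        rw [show ((R:ℂ)^2) = ((R^2 : ℝ) : ℂ) by push_cast; ring, Complex.norm_real, Real.norm_eq_abs] at h3
        have h4 : ‖a‖ * ‖z‖ ≤ r * r := by
          apply mul_le_mul haabs hzr (norm_nonneg z) (le_trans (norm_nonneg a) haabs)
        rw [h3] at h4
        rw [abs_of_nonneg (by positivity)] at h4
        nlinarith
      intro hBz
      rw [hB] at hBz
      simp only at hBz
      rw [div_eq_zero_iff, sub_eq_zero] at hBz
      rcases hBz with h | h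
      · exact h2 h.symm
      · exact hR.ne' (by exact_mod_cast h)
    -- order relations
    have hordne : ∀ z ∈ closedBall (0:ℂ) r, z ≠ a →
        analyticOrderAt g z = analyticOrderAt f z := by
      intro z hz hza
      have hne := order_ne_top hf h0 z
      have hom : analyticOrderAt f z = ((analyticOrderAt f z).toNat : ℕ∞) :=
        (ENat.coe_toNat hne).symm
      have hdo := peel_order_ne hf hfa hza hom
      rw [hom]
      exact order_mul_unit (hdd.analyticAt z) (hBd.analyticAt z) (hg.analyticAt z) (hBne z hz) hdo
    obtain ⟨m, homa⟩ := order_pos_of_zero hf h0 hfa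
    have homga : analyticOrderAt g a = (m : ℕ) := by
      have hdo := peel_order_at hf hfa homa
      exact order_mul_unit (hdd.analyticAt a) (hBd.analyticAt a) (hg.analyticAt a)
        (hBne a haball) hdo
    -- counting
    set t := (finite_zeros hf h0 r).toFinset with ht
    have hat : a ∈ t := by rw [ht, Set.Finite.mem_toFinset]; exact ⟨haball, hfa⟩
    have hcf : zeroCount f hf r = ∑ z ∈ t, (analyticOrderAt f z).toNat :=
      zeroCount_eq_sum hf t
        (fun z hz hfz => by rw [ht, Set.Finite.mem_toFinset]; exact ⟨hz, hfz⟩)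
        (fun z hz => by rw [ht, Set.Finite.mem_toFinset] at hz; exact hz.1)
    have hcg : zeroCount g hg r = ∑ z ∈ t, (analyticOrderAt g z).toNat := by
      apply zeroCount_eq_sum hg t ?_
        (fun z hz => by rw [ht, Set.Finite.mem_toFinset] at hz; exact hz.1)
      intro z hz hgz
      have hdz : d z = 0 := by
        rcases mul_eq_zero.1 hgz with h | h
        · exact h
        · exact absurd h (hBne z hz)
      have hfz : f z = 0 := by rw [factor hf hfa z, ← hd, hdz, mul_zero]
      rw [ht, Set.Finite.mem_toFinset]; exact ⟨hz, hfz⟩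
    have hsum : ∑ z ∈ t, (analyticOrderAt f z).toNat
        = (∑ z ∈ t, (analyticOrderAt g z).toNat) + 1 := by
      rw [← Finset.add_sum_erase _ _ hat, ← Finset.add_sum_erase _ _ hat]
      have e1 : (analyticOrderAt f a).toNat = (analyticOrderAt g a).toNat + 1 := by
        rw [homa, homga]
        rfl
      have e2 : ∑ z ∈ t.erase a, (analyticOrderAt f z).toNat
          = ∑ z ∈ t.erase a, (analyticOrderAt g z).toNat := by
        apply Finset.sum_congr rfl
        intro z hz
        have hza : z ≠ a := Finset.ne_of_mem_erase hz
        have hzball : z ∈ closedBall (0:ℂ) r := by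
          have h5 := Finset.mem_of_mem_erase hz
          rw [ht, Set.Finite.mem_toFinset] at h5; exact h5.1
        rw [hordne z hzball hza]
      omega
    have hng : n ≤ zeroCount g hg r := by
      rw [hcf, hsum, ← hcg] at hn; omega
    -- value at 0
    have haz : (0:ℂ) ≠ a := Ne.symm ha0
    have hg0 : ‖g 0‖ = ‖f 0‖ / ‖a‖ * R := by
      have hd0 : d 0 = f 0 / (0 - a) := by
        rw [hd, dslope_of_ne f haz, slope_def_field, hfa, sub_zero]
      have hB0 : B 0 = (R:ℂ) := by
        rw [hB]; simp only [mul_zero, sub_zero]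
        rw [sq]; field_simp
      show ‖d 0 * B 0‖ = _
      rw [hd0, hB0, norm_mul, norm_div, zero_sub, norm_neg, Complex.norm_real,
        Real.norm_of_nonneg hR.le]
    have hg0ne : g 0 ≠ 0 := by
      have hpos : 0 < ‖g 0‖ := by
        rw [hg0]
        have h6 : 0 < ‖a‖ := norm_pos_iff.2 ha0
        have h7 : 0 < ‖f 0‖ := norm_pos_iff.2 h0
        positivity
      exact norm_pos_iff.1 hpos
    -- sphere bound
    have hMg : ∀ z ∈ Metric.sphere (0:ℂ) R, ‖g z‖ ≤ M := by
      intro z hzs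
      have hz : ‖z‖ = R := by rwa [mem_sphere_zero_iff_norm] at hzs
      have hkey : (R:ℂ)^2 - (starRingEnd ℂ a) * z = z * (starRingEnd ℂ) (z - a) := by
        have h1 : z * (starRingEnd ℂ) z = ((‖z‖^2 : ℝ) : ℂ) := by
          rw [Complex.mul_conj, Complex.normSq_eq_norm_sq]
        rw [map_sub, mul_sub, h1, hz]; push_cast; ring
      have hBz : ‖B z‖ = ‖z - a‖ := by
        rw [hB]; simp only
        rw [hkey, norm_div, norm_mul, Complex.norm_real, Real.norm_of_nonneg hR.le,
          RCLike.norm_conj, hz]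
        field_simp
      calc ‖g z‖ = ‖d z‖ * ‖B z‖ := norm_mul _ _
        _ = ‖(z - a) * d z‖ := by rw [hBz, norm_mul]; ring
        _ = ‖f z‖ := by rw [← factor hf hfa]
        _ ≤ M := hM z hzs
    have hih := ih g hg hg0ne r R M hr hrR hMg hng
    have hmono : ‖f 0‖ * (R / r) ≤ ‖g 0‖ := by
      rw [hg0, div_mul_eq_mul_div, mul_div_assoc]
      have h6 : 0 < ‖a‖ := norm_pos_iff.2 ha0
      have h8 : ‖a‖ ≤ r := haabs
      gcongr
    calc ‖f 0‖ * (R/r)^(n+1) = (‖f 0‖ * (R/r)) * (R/r)^n := by ring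
      _ ≤ ‖g 0‖ * (R/r)^n := mul_le_mul_of_nonneg_right hmono (by positivity)
      _ ≤ M := hih

theorem stmt_9 (f : ℂ → ℂ) (hf : Differentiable ℂ f) (hf0 : f 0 = 1)
    (σ : ℝ) (hσ : 0 < σ)
    (hgrowth : ∀ z : ℂ, ‖f z‖ ≤ Real.exp (σ * ‖z‖)) :
    Filter.limsup (fun r : ℝ => (zeroCount f hf r : ℝ) / r) atTop ≤ Real.exp 1 * σ := by
  have h0 : f 0 ≠ 0 := by rw [hf0]; exact one_ne_zero
  have hbound : ∀ᶠ r in atTop, (zeroCount f hf r : ℝ) / r ≤ Real.exp 1 * σ := by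
    filter_upwards [eventually_gt_atTop (0:ℝ)] with r hr
    set n := zeroCount f hf r with hn
    have hexp1 : (1:ℝ) < Real.exp 1 := by
      have := Real.add_one_lt_exp (x := 1) one_ne_zero
      linarith
    have hrR : r < Real.exp 1 * r := by nlinarith
    have hM : ∀ z ∈ Metric.sphere (0:ℂ) (Real.exp 1 * r),
        ‖f z‖ ≤ Real.exp (σ * (Real.exp 1 * r)) := by
      intro z hz
      rw [mem_sphere_zero_iff_norm] at hz
      have := hgrowth z
      rw [hz] at this
      exact this
    have hkey := key n f hf h0 r (Real.exp 1 * r) _ hr hrR hM le_rfl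
    rw [hf0, norm_one, one_mul] at hkey
    have hdiv : Real.exp 1 * r / r = Real.exp 1 := by field_simp
    rw [hdiv, Real.exp_one_pow] at hkey
    have hle := Real.exp_le_exp.1 hkey
    rw [div_le_iff₀ hr]
    nlinarith
  have hcobdd : IsCoboundedUnder (· ≤ ·) atTop (fun r : ℝ => (zeroCount f hf r : ℝ) / r) :=
    isCoboundedUnder_le_of_eventually_le atTop (x := 0)
      (by filter_upwards [eventually_gt_atTop (0:ℝ)] with r hr; positivity)
  exact limsup_le_of_le hcobdd hbound
end

section
/- For k > 1, the principal value of Im ∫₀^{k²} sqrt(ζ − k²)/(ζ − 1) dζ (with the branch of sqrt positive on the positive reals rotated to the cut) vanishes if and only if c = sqrt(k²−1) satisfies log(sqrt(c²+1)+c) = sqrt(1+c⁻²). -/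
/-!
Write `c = √(k² - 1)` and `u = √(k² - ζ)`, so that `ζ - 1 = c² - u²`. Then
`2u - 2c log(u + c) + c log|ζ - 1|` is an antiderivative of `u / (ζ - 1)` on both sides of the
pole. Its only singular part, `c log|ζ - 1|`, is even about `ζ = 1` and cancels in the principal
value, which is therefore `2(c log(k + c) - k)`. As `√(c² + 1) = k` and `√(1 + c⁻²) = k / c`,
this vanishes exactly when `log(√(c² + 1) + c) = √(1 + c⁻²)`.
-/

open Filter Set Real Topology

theorem hasDerivAt_two_sqrt_sub_log_add_log {m p c x : ℝ} (hc : 0 < c) (hcm : c ^ 2 = m - p)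
    (hxm : x < m) (hxp : x ≠ p) :
    HasDerivAt (fun x => 2 * √(m - x) - 2 * c * log (√(m - x) + c) + c * log (x - p))
      (√(m - x) / (x - p)) x := by
  have hu : 0 < √(m - x) := sqrt_pos.2 (by linarith)
  have hxp' : x - p ≠ 0 := sub_ne_zero.2 hxp
  have hsqrt : HasDerivAt (fun x => √(m - x)) (-1 / (2 * √(m - x))) x :=
    ((hasDerivAt_id x).const_sub m).sqrt (sub_ne_zero.2 hxm.ne')
  have hlog : HasDerivAt (fun x => log (√(m - x) + c)) (-1 / (2 * √(m - x)) / (√(m - x) + c)) x :=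
    (hsqrt.add_const c).log (by positivity)
  have hpole : HasDerivAt (fun x => log (x - p)) (1 / (x - p)) x := by
    simpa using ((hasDerivAt_id x).sub_const p).log hxp'
  refine (((hsqrt.const_mul 2).sub (hlog.const_mul (2 * c))).add
    (hpole.const_mul c)).congr_deriv ?_
  have hx : x - p = c ^ 2 - √(m - x) ^ 2 := by rw [sq_sqrt (by linarith), hcm]; ring
  have hpos : √(m - x) + c ≠ 0 := by positivity
  rw [hx] at hxp' ⊢
  field_simp
  ring

theorem intervalIntegral_eq_sub_of_hasDerivAt_add_log {f H : ℝ → ℝ} {a b p c u v : ℝ}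
    (hH : ContinuousOn H (Icc a b))
    (hderiv : ∀ x ∈ Ioo a b, x ≠ p → HasDerivAt (fun x => H x + c * log (x - p)) (f x) x)
    (hf : ContinuousOn f (Icc a b \ {p})) (huv : u ≤ v) (hau : a ≤ u) (hvb : v ≤ b)
    (hp : p ∉ Icc u v) :
    (∫ x in u..v, f x) = H v + c * log (v - p) - (H u + c * log (u - p)) := by
  have hsub : Icc u v ⊆ Icc a b \ {p} := fun x hx =>
    ⟨⟨hau.trans hx.1, hx.2.trans hvb⟩, fun h => hp (by rw [← mem_singleton_iff.1 h]; exact hx)⟩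
  refine intervalIntegral.integral_eq_sub_of_hasDerivAt_of_le
    (f := fun x => H x + c * log (x - p)) huv ?_ ?_ ?_
  · refine (hH.mono fun x hx => (hsub hx).1).add
      (continuousOn_const.mul (ContinuousOn.log ?_ ?_))
    · fun_prop
    · intro x hx h
      exact (hsub hx).2 (by rw [mem_singleton_iff]; linarith [sub_eq_zero.1 h])
  · intro x hx
    exact hderiv x ⟨hau.trans_lt hx.1, hx.2.trans_le hvb⟩ (hsub (Ioo_subset_Icc_self hx)).2
  · exact (hf.mono hsub).intervalIntegrable_of_Icc huv

theorem tendsto_integral_add_integral_of_hasDerivAt_add_log {f H : ℝ → ℝ} {a b p c : ℝ}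
    (hap : a < p) (hpb : p < b) (hH : ContinuousOn H (Icc a b))
    (hderiv : ∀ x ∈ Ioo a b, x ≠ p → HasDerivAt (fun x => H x + c * log (x - p)) (f x) x)
    (hf : ContinuousOn f (Icc a b \ {p})) :
    Tendsto (fun ε => (∫ x in a..p - ε, f x) + ∫ x in p + ε..b, f x) (𝓝[>] 0)
      (𝓝 (H b - H a + c * (log (b - p) - log (p - a)))) := by
  set L := H b - H a + c * (log (b - p) - log (p - a)) with hL
  have hjump : Tendsto (fun ε => H (p - ε) - H (p + ε)) (𝓝 0) (𝓝 0) := by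
    have hHp : ContinuousAt H p := hH.continuousAt (Icc_mem_nhds hap hpb)
    have hsub : Tendsto (fun ε => p - ε) (𝓝 0) (𝓝 p) := by
      simpa using (tendsto_const_nhds (x := p)).sub (tendsto_id (x := 𝓝 (0 : ℝ)))
    have hadd : Tendsto (fun ε => p + ε) (𝓝 0) (𝓝 p) := by
      simpa using (tendsto_const_nhds (x := p)).add (tendsto_id (x := 𝓝 (0 : ℝ)))
    simpa using (hHp.tendsto.comp hsub).sub (hHp.tendsto.comp hadd)
  have hsum : ∀ ε ∈ Ioo 0 (min (p - a) (b - p)),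
      H (p - ε) - H (p + ε) + L = (∫ x in a..p - ε, f x) + ∫ x in p + ε..b, f x := by
    rintro ε ⟨hε, hεab⟩
    obtain ⟨hεa, hεb⟩ := lt_min_iff.1 hεab
    -- `Real.log (-ε) = Real.log ε`, so the singular terms at `p ∓ ε` cancel
    rw [intervalIntegral_eq_sub_of_hasDerivAt_add_log hH hderiv hf (by linarith) le_rfl
        (by linarith) (fun h => by linarith [h.2]),
      intervalIntegral_eq_sub_of_hasDerivAt_add_log hH hderiv hf (by linarith) (by linarith)
        le_rfl (fun h => by linarith [h.1]),
      show p - ε - p = -ε by ring, show a - p = -(p - a) by ring, log_neg_eq_log,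
      log_neg_eq_log, hL, add_sub_cancel_left]
    ring
  have hlim := (hjump.mono_left (nhdsWithin_le_nhds (s := Ioi 0))).add_const L
  rw [zero_add] at hlim
  refine hlim.congr' ?_
  filter_upwards [Ioo_mem_nhdsGT (lt_min (sub_pos.2 hap) (sub_pos.2 hpb))] with ε hε
  exact hsum ε hε

theorem continuous_two_sqrt_sub_log {m c : ℝ} (hc : 0 < c) :
    Continuous fun x => 2 * √(m - x) - 2 * c * log (√(m - x) + c) := by
  have hpos : ∀ x, √(m - x) + c ≠ 0 := fun x => by positivity
  exact (continuous_const.mul (by fun_prop)).sub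
    (continuous_const.mul ((by fun_prop : Continuous fun x => √(m - x) + c).log hpos))

theorem log_sqrt_sq_add_one_add_eq_sqrt_iff {k c : ℝ} (hk : 0 < k) (hc : 0 < c)
    (hc2 : c ^ 2 = k ^ 2 - 1) :
    log (√(c ^ 2 + 1) + c) = √(1 + 1 / c ^ 2) ↔ 2 * (c * log (k + c) - k) = 0 := by
  have hk' : √(c ^ 2 + 1) = k := by rw [hc2, sub_add_cancel, sqrt_sq hk.le]
  have hkc : √(1 + 1 / c ^ 2) = k / c := by
    rw [← sqrt_sq (div_pos hk hc).le, div_pow]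
    congr 1
    field_simp
    linarith
  rw [hk', hkc, eq_div_iff hc.ne']
  constructor <;> intro h <;> linarith

theorem stmt_12 (k : ℝ) (hk : 1 < k) :
    (Tendsto
        (fun ε : ℝ =>
          (∫ ζ in (0:ℝ)..(1 - ε), Real.sqrt (k ^ 2 - ζ) / (ζ - 1)) +
            ∫ ζ in (1 + ε)..(k ^ 2), Real.sqrt (k ^ 2 - ζ) / (ζ - 1))
        (nhdsWithin 0 (Set.Ioi 0)) (nhds 0)) ↔
      Real.log (Real.sqrt (Real.sqrt (k ^ 2 - 1) ^ 2 + 1) + Real.sqrt (k ^ 2 - 1)) =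
        Real.sqrt (1 + 1 / Real.sqrt (k ^ 2 - 1) ^ 2) := by
  set c := √(k ^ 2 - 1)
  have hk1 : 1 < k ^ 2 := by nlinarith
  have hc : 0 < c := sqrt_pos.2 (by linarith)
  have hc2 : c ^ 2 = k ^ 2 - 1 := sq_sqrt (by linarith)
  have hf : ContinuousOn (fun ζ => √(k ^ 2 - ζ) / (ζ - 1)) (Icc 0 (k ^ 2) \ {1}) :=
    (by fun_prop : Continuous fun ζ => √(k ^ 2 - ζ)).continuousOn.div (by fun_prop)
      fun ζ hζ => sub_ne_zero.2 hζ.2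
  have hlim := tendsto_integral_add_integral_of_hasDerivAt_add_log zero_lt_one hk1
    (continuous_two_sqrt_sub_log hc).continuousOn
    (fun ζ hζ hζ1 => hasDerivAt_two_sqrt_sub_log_add_log hc hc2 hζ.2 hζ1) hf
  have hL : 2 * √(k ^ 2 - k ^ 2) - 2 * c * log (√(k ^ 2 - k ^ 2) + c)
      - (2 * √(k ^ 2 - 0) - 2 * c * log (√(k ^ 2 - 0) + c))
      + c * (log (k ^ 2 - 1) - log (1 - 0)) = 2 * (c * log (k + c) - k) := by
    rw [sub_self, sub_zero, sub_zero, sqrt_zero, sqrt_sq (by linarith), zero_add, ← hc2,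
      log_pow, log_one]
    push_cast
    ring
  rw [hL] at hlim
  rw [log_sqrt_sq_add_one_add_eq_sqrt_iff (by linarith) hc hc2]
  refine ⟨tendsto_nhds_unique hlim, fun h => ?_⟩
  rwa [h] at hlim
end
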